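/- arXiv:1508.06446 — 2 statements merged into one kernel-verified Lean document; each statement's English description precedes it below -/
import Mathlib

section
/- If w_1, w_2, ... are i.i.d. random variables with w_i ~ Beta(1, α) for α > 0, and β_i = w_i · ∏_{j<i} (1 - w_j), then almost surely ∑_{i=1}^∞ β_i = 1. -/
open MeasureTheory ProbabilityTheory Filter
open scoped ENNReal Topology

/-- Beta(a,b) measure on ℝ, defined via its density on (0,1). -/
noncomputable def betaMeasure' (a b : ℝ) : Measure ℝ :=
  (volume.restrict (Set.Ioo (0:ℝ) 1)).withDensity
    fun x => ENNReal.ofReal (x ^ (a - 1) * (1 - x) ^ (b - 1) * Real.Gamma (a + b) /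
      (Real.Gamma a * Real.Gamma b))

/-! The stick left after `n` breaks is `∏_{j<n} (1 - w j)`, so the sticks sum to one exactly when
it shrinks to zero. Its mean is `(α / (α + 1)) ^ n` by independence, which is summable, so by
Markov's inequality `∑_n ∏_{j<n} (1 - w j)` is almost surely finite and its terms tend to zero. -/

theorem ae_betaMeasure'_mem_Ioo (a b : ℝ) : ∀ᵐ x ∂betaMeasure' a b, x ∈ Set.Ioo 0 1 :=
  (withDensity_absolutelyContinuous _ _).ae_le (ae_restrict_mem measurableSet_Ioo)

theorem betaMeasure'_one_eq_withDensity {α : ℝ} (hα : 0 < α) :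
    betaMeasure' 1 α = (volume.restrict (Set.Ioo (0:ℝ) 1)).withDensity
      fun x => ENNReal.ofReal (α * (1 - x) ^ (α - 1)) := by
  have hΓ : Real.Gamma α ≠ 0 := (Real.Gamma_pos_of_pos hα).ne'
  unfold betaMeasure'
  congr 1
  funext x
  rw [add_comm, Real.Gamma_add_one hα.ne', Real.Gamma_one, sub_self, Real.rpow_zero]
  congr 1
  field_simp

theorem integral_mul_one_sub_rpow {α : ℝ} (hα : 0 < α) :
    ∫ x in Set.Ioo (0:ℝ) 1, α * (1 - x) ^ α = α / (α + 1) := by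
  rw [← integral_Ioc_eq_integral_Ioo, ← intervalIntegral.integral_of_le zero_le_one,
    intervalIntegral.integral_const_mul, intervalIntegral.integral_comp_sub_left (· ^ α),
    sub_self, sub_zero, integral_rpow (Or.inl (by linarith)), Real.one_rpow,
    Real.zero_rpow (by linarith)]
  ring

theorem lintegral_ofReal_one_sub_betaMeasure'_one {α : ℝ} (hα : 0 < α) :
    ∫⁻ x, ENNReal.ofReal (1 - x) ∂betaMeasure' 1 α = ENNReal.ofReal (α / (α + 1)) := by
  have hint : IntegrableOn (fun x : ℝ => α * (1 - x) ^ α) (Set.Ioo 0 1) := by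
    refine (intervalIntegrable_iff_integrableOn_Ioo_of_le zero_le_one).1 ?_
    simpa using ((intervalIntegral.intervalIntegrable_rpow' (r := α) (by linarith)
      (a := 0) (b := 1)).comp_sub_left 1).symm.const_mul α
  have hnonneg : 0 ≤ᵐ[volume.restrict (Set.Ioo (0:ℝ) 1)] fun x => α * (1 - x) ^ α :=
    (ae_restrict_iff' measurableSet_Ioo).2 <| ae_of_all _ fun x hx => by
      have : (0:ℝ) ≤ 1 - x := by linarith [hx.2]
      positivity
  rw [betaMeasure'_one_eq_withDensity hα,
    lintegral_withDensity_eq_lintegral_mul _ (by fun_prop) (by fun_prop),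
    ← integral_mul_one_sub_rpow hα, ofReal_integral_eq_lintegral_ofReal hint hnonneg]
  refine setLIntegral_congr_fun measurableSet_Ioo fun x hx => ?_
  have hx' : 0 < 1 - x := by linarith [hx.2]
  simp only [Pi.mul_apply]
  rw [← ENNReal.ofReal_mul (by positivity), mul_assoc, ← Real.rpow_add_one hx'.ne', sub_add_cancel]

theorem ae_tendsto_zero_of_tsum_lintegral_ne_top {Ω : Type*} [MeasurableSpace Ω] {μ : Measure Ω}
    {f : ℕ → Ω → ℝ≥0∞} (hf : ∀ n, Measurable (f n)) (hsum : ∑' n, ∫⁻ ω, f n ω ∂μ ≠ ∞) :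
    ∀ᵐ ω ∂μ, Tendsto (fun n => f n ω) atTop (𝓝 0) := by
  rw [← lintegral_tsum fun n => (hf n).aemeasurable] at hsum
  filter_upwards [ae_lt_top (Measurable.tsum hf) hsum] with ω hω
  exact ENNReal.tendsto_atTop_zero_of_tsum_ne_top hω.ne

theorem ProbabilityTheory.iIndepFun.ae_tendsto_prod_range_zero {Ω : Type*} [MeasurableSpace Ω]
    {μ : Measure Ω} {X : ℕ → Ω → ℝ≥0∞} (hX : iIndepFun X μ) (hmeas : ∀ i, Measurable (X i))
    {c : ℝ≥0∞} (hc : c < 1) (hmean : ∀ i, ∫⁻ ω, X i ω ∂μ ≤ c) :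
    ∀ᵐ ω ∂μ, Tendsto (fun n => ∏ i ∈ Finset.range n, X i ω) atTop (𝓝 0) := by
  have hgeom : ∑' n, c ^ n ≠ ∞ := by
    rw [ENNReal.tsum_geometric]
    exact ENNReal.inv_ne_top.2 (tsub_pos_of_lt hc).ne'
  refine ae_tendsto_zero_of_tsum_lintegral_ne_top
    (fun n => Finset.measurable_prod _ fun i _ => hmeas i)
    (ne_top_of_le_ne_top hgeom (ENNReal.tsum_le_tsum fun n => ?_))
  rw [lintegral_prod_eq_prod_lintegral_of_indepFun _ X hX hmeas]
  simpa using Finset.prod_le_pow_card (Finset.range n) _ c fun i _ => hmean i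

theorem Finset.sum_range_mul_prod_one_sub {R : Type*} [CommRing R] (v : ℕ → R) (n : ℕ) :
    ∑ i ∈ range n, v i * ∏ j ∈ range i, (1 - v j) = 1 - ∏ j ∈ range n, (1 - v j) := by
  induction n with
  | zero => simp
  | succ n ih => rw [sum_range_succ, prod_range_succ, ih]; ring

theorem hasSum_mul_prod_one_sub {v : ℕ → ℝ} (hv : ∀ i, v i ∈ Set.Icc 0 1)
    (hprod : Tendsto (fun n => ∏ j ∈ Finset.range n, (1 - v j)) atTop (𝓝 0)) :
    HasSum (fun i => v i * ∏ j ∈ Finset.range i, (1 - v j)) 1 := by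
  have hnonneg (i : ℕ) : 0 ≤ v i * ∏ j ∈ Finset.range i, (1 - v j) :=
    mul_nonneg (hv i).1 (Finset.prod_nonneg fun j _ => sub_nonneg.2 (hv j).2)
  rw [hasSum_iff_tendsto_nat_of_nonneg hnonneg]
  simpa [Finset.sum_range_mul_prod_one_sub] using hprod.const_sub 1

theorem stick_breaking_sums_to_one_general
    {Ω : Type*} [MeasurableSpace Ω] (μ : Measure Ω)
    (α : ℝ) (hα : 0 < α) (w : ℕ → Ω → ℝ)
    (hmeas : ∀ i, Measurable (w i))
    (hindep : iIndepFun w μ)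
    (hlaw : ∀ i, Measure.map (w i) μ = betaMeasure' 1 α) :
    ∀ᵐ ω ∂μ, ∑' i : ℕ, (w i ω * ∏ j ∈ Finset.range i, (1 - w j ω)) = 1 := by
  have hstick : Measurable fun x : ℝ => ENNReal.ofReal (1 - x) := by fun_prop
  have hunit : ∀ᵐ ω ∂μ, ∀ i, w i ω ∈ Set.Ioo 0 1 := ae_all_iff.2 fun i =>
    ae_of_ae_map (hmeas i).aemeasurable (hlaw i ▸ ae_betaMeasure'_mem_Ioo 1 α)
  have hmean (i : ℕ) : ∫⁻ ω, ENNReal.ofReal (1 - w i ω) ∂μ = ENNReal.ofReal (α / (α + 1)) := by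
    rw [← lintegral_map hstick (hmeas i), hlaw i, lintegral_ofReal_one_sub_betaMeasure'_one hα]
  have hshrink := (hindep.comp _ fun _ => hstick).ae_tendsto_prod_range_zero
    (fun i => hstick.comp (hmeas i))
    (ENNReal.ofReal_lt_one.2 ((div_lt_one (by linarith)).2 (by linarith))) fun i => (hmean i).le
  filter_upwards [hunit, hshrink] with ω hω hprod
  have hω' (i : ℕ) : w i ω ∈ Set.Icc 0 1 := Set.Ioo_subset_Icc_self (hω i)
  refine (hasSum_mul_prod_one_sub hω' ?_).tsum_eq
  simpa [Function.comp_def, ENNReal.toReal_prod,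
    fun i => ENNReal.toReal_ofReal (sub_nonneg.2 (hω' i).2)]
    using (ENNReal.tendsto_toReal ENNReal.zero_ne_top).comp hprod

/-- Stick-breaking: if `w i` are i.i.d. Beta(1, α) with α > 0 and
`β i = w i * ∏_{j<i} (1 - w j)`, then almost surely `∑ i, β i = 1`. -/
theorem stick_breaking_sums_to_one
    {Ω : Type*} [MeasurableSpace Ω] (μ : Measure Ω) [IsProbabilityMeasure μ]
    (α : ℝ) (hα : 0 < α) (w : ℕ → Ω → ℝ)
    (hmeas : ∀ i, Measurable (w i))
    (hindep : iIndepFun w μ)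
    (hlaw : ∀ i, Measure.map (w i) μ = betaMeasure' 1 α) :
    ∀ᵐ ω ∂μ, ∑' i : ℕ, (w i ω * ∏ j ∈ Finset.range i, (1 - w j ω)) = 1 :=
  stick_breaking_sums_to_one_general μ α hα w hmeas hindep hlaw
end

section
/- Let K_n be the number of tables after n customers in CRP(α). Then K_n / log n → α almost surely as n → ∞. -/
/-!
The indicators `B i` are independent with values in `{0, 1}`, so `Var K_n ≤ E K_n`, and
`E K_n = ∑_{i<n} α / (α + i) ∼ α log n` by comparison with the harmonic series. Along
`n_k = 2 ^ k ^ 2` we have `log n_k = k² log 2`, so Chebyshev's inequality gives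
`∑_k P(|K_{n_k} - E K_{n_k}| ≥ ε log n_k) ≲ ∑_k 1 / (ε² log n_k) < ∞`, and by Borel–Cantelli
`K_{n_k} / log n_k → α` almost surely. Since `K_n` and `log n` are nondecreasing and
`log n_{k+1} / log n_k → 1`, the limit along `n_k` extends to all `n`.
-/

open MeasureTheory ProbabilityTheory Filter Finset Topology Asymptotics

theorem tendsto_harmonic_div_log :
    Tendsto (fun n : ℕ => (harmonic n : ℝ) / Real.log n) atTop (𝓝 1) := by
  have hlog : Tendsto (fun n : ℕ => Real.log n) atTop atTop :=
    Real.tendsto_log_atTop.comp tendsto_natCast_atTop_atTop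
  have h := (Real.tendsto_harmonic_sub_log.div_atTop hlog).add_const 1
  rw [zero_add] at h
  refine h.congr' ?_
  filter_upwards [hlog.eventually_gt_atTop 0] with n hn
  rw [sub_div, div_self hn.ne', sub_add_cancel]

theorem tendsto_sum_range_div_log_of_tendsto_mul {p : ℕ → ℝ} {a : ℝ}
    (hp : Tendsto (fun i : ℕ => ((i : ℝ) + 1) * p i) atTop (𝓝 a)) :
    Tendsto (fun n : ℕ => (∑ i ∈ range n, p i) / Real.log n) atTop (𝓝 a) := by
  set g : ℕ → ℝ := fun i => 1 / ((i : ℝ) + 1)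
  have hg_pos : ∀ i, 0 < g i := fun i => by positivity
  have hH : ∀ n, ∑ i ∈ range n, g i = harmonic n := by simp [g, harmonic]
  have hsmall : (fun i => p i - a * g i) =o[atTop] g := by
    rw [isLittleO_iff_tendsto fun i hi => absurd hi (hg_pos i).ne']
    refine (tendsto_sub_nhds_zero_iff.mpr hp).congr fun i => ?_
    simp only [g]
    field_simp
  have hrel : Tendsto (fun n => (∑ i ∈ range n, (p i - a * g i)) / harmonic n) atTop (𝓝 0) := by
    simpa only [hH] using (hsmall.sum_range (fun i => (hg_pos i).le)
      Real.tendsto_sum_range_one_div_nat_succ_atTop).tendsto_div_nhds_zero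
  have h := (hrel.add_const a).mul tendsto_harmonic_div_log
  rw [zero_add, mul_one] at h
  refine h.congr' ?_
  filter_upwards [eventually_ne_atTop 0] with n hn
  have hHn : (harmonic n : ℝ) ≠ 0 := by exact_mod_cast (harmonic_pos hn).ne'
  rw [sum_sub_distrib, ← mul_sum, hH]
  field_simp
  ring

theorem tendsto_div_of_monotone_of_tendsto_div_subseq {u f : ℕ → ℝ} {c : ℕ → ℕ} {l : ℝ}
    (hu : Monotone u) (hu_nonneg : ∀ n, 0 ≤ u n) (hf : Monotone f)
    (hf_pos : ∀ᶠ n in atTop, 0 < f n) (hc : StrictMono c)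
    (hratio : Tendsto (fun k => f (c (k + 1)) / f (c k)) atTop (𝓝 1))
    (hlim : Tendsto (fun k => u (c k) / f (c k)) atTop (𝓝 l)) :
    Tendsto (fun n => u n / f n) atTop (𝓝 l) := by
  have hfc_pos : ∀ᶠ k in atTop, 0 < f (c k) := hc.tendsto_atTop.eventually hf_pos
  have hupper : Tendsto (fun k => u (c (k + 1)) / f (c k)) atTop (𝓝 l) := by
    have h := (hlim.comp (tendsto_add_atTop_nat 1)).mul hratio
    rw [mul_one] at h
    refine h.congr' ?_
    filter_upwards [(tendsto_add_atTop_nat 1).eventually hfc_pos] with k hk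
    exact div_mul_div_cancel₀ hk.ne'
  have hlower : Tendsto (fun k => u (c k) / f (c (k + 1))) atTop (𝓝 l) := by
    have h := hlim.div hratio one_ne_zero
    rw [div_one] at h
    refine h.congr' ?_
    filter_upwards [hfc_pos] with k hk
    exact div_div_div_cancel_right₀ hk.ne' _ _
  -- `k n` is the index with `c (k n) ≤ n < c (k n + 1)`
  set k : ℕ → ℕ := fun n => Nat.findGreatest (fun j => c j ≤ n) n
  have hk_le : ∀ n, c 0 ≤ n → c (k n) ≤ n := fun n hn =>
    Nat.findGreatest_spec (P := fun j => c j ≤ n) (Nat.zero_le n) hn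
  have hk_lt : ∀ n, n < c (k n + 1) := by
    intro n
    by_contra! h
    have := Nat.le_findGreatest (P := fun j => c j ≤ n) ((hc.id_le _).trans h) h
    exact (Nat.lt_succ_self _).not_ge this
  have hk : Tendsto k atTop atTop := by
    refine tendsto_atTop.mpr fun j => eventually_atTop.mpr ⟨c j, fun n hn => ?_⟩
    exact Nat.le_findGreatest (P := fun i => c i ≤ n) ((hc.id_le j).trans hn) hn
  refine tendsto_of_tendsto_of_tendsto_of_le_of_le' (hlower.comp hk) (hupper.comp hk) ?_ ?_
  all_goals
    filter_upwards [hk.eventually hfc_pos, eventually_ge_atTop (c 0)] with n hpos hn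
    have hfn : 0 < f n := hpos.trans_le (hf (hk_le n hn))
  · exact div_le_div₀ (hu_nonneg n) (hu (hk_le n hn)) hfn (hf (hk_lt n).le)
  · exact div_le_div₀ (hu_nonneg _) (hu (hk_lt n).le) hpos (hf (hk_le n hn))

theorem monotone_log_natCast : Monotone fun n : ℕ => Real.log n := by
  intro m n hmn
  rcases m.eq_zero_or_pos with rfl | hm
  · simpa using Real.log_natCast_nonneg n
  · exact Real.log_le_log (by positivity) (by exact_mod_cast hmn)

theorem tendsto_succ_mul_div_add (α : ℝ) :
    Tendsto (fun i : ℕ => ((i : ℝ) + 1) * (α / (α + i))) atTop (𝓝 α) := by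
  have h := (tendsto_add_mul_div_add_mul_atTop_nhds (1 : ℝ) α 1 one_ne_zero).const_mul α
  rw [div_one, mul_one] at h
  exact h.congr fun i => by ring

theorem log_two_pow_sq (k : ℕ) : Real.log ((2 ^ k ^ 2 : ℕ) : ℝ) = k ^ 2 * Real.log 2 := by
  push_cast
  rw [Real.log_pow]
  push_cast
  ring

theorem summable_inv_log_two_pow_sq :
    Summable fun k : ℕ => (Real.log ((2 ^ k ^ 2 : ℕ) : ℝ))⁻¹ := by
  simp_rw [log_two_pow_sq, mul_inv]
  exact (Real.summable_nat_pow_inv.mpr one_lt_two).mul_right _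

theorem tendsto_log_two_pow_sq_succ_div :
    Tendsto (fun k : ℕ => Real.log ((2 ^ (k + 1) ^ 2 : ℕ) : ℝ) / Real.log ((2 ^ k ^ 2 : ℕ) : ℝ))
      atTop (𝓝 1) := by
  have h := (tendsto_add_mul_div_add_mul_atTop_nhds (1 : ℝ) 0 1 one_ne_zero).pow 2
  rw [div_one, one_pow] at h
  refine h.congr' ?_
  filter_upwards [eventually_ne_atTop 0] with k hk
  have hlog : Real.log 2 ≠ 0 := by positivity
  simp only [log_two_pow_sq]
  field_simp
  push_cast
  ring

section
variable {Ω : Type*} [MeasurableSpace Ω] {μ : Measure Ω}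

theorem ae_tendsto_zero_of_tsum_measure_le_abs_ne_top {Z : ℕ → Ω → ℝ}
    (h : ∀ ε > 0, ∑' k, μ {ω | ε ≤ |Z k ω|} ≠ ⊤) :
    ∀ᵐ ω ∂μ, Tendsto (fun k => Z k ω) atTop (𝓝 0) := by
  have hev : ∀ᵐ ω ∂μ, ∀ j : ℕ, ∀ᶠ k in atTop, |Z k ω| < 1 / ((j : ℝ) + 1) :=
    ae_all_iff.mpr fun j => by
      filter_upwards [ae_eventually_notMem (h _ Nat.one_div_pos_of_nat)] with ω hω
      simpa only [Set.mem_ofPred_eq, not_le] using hω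
  filter_upwards [hev] with ω hω
  refine NormedAddGroup.tendsto_nhds_zero.mpr fun ε hε => ?_
  obtain ⟨j, hj⟩ := exists_nat_one_div_lt hε
  filter_upwards [hω j] with k hk
  exact (Real.norm_eq_abs _ ▸ hk).trans hj

theorem ae_tendsto_sub_integral_div_of_summable_variance_div_sq [IsFiniteMeasure μ]
    {Y : ℕ → Ω → ℝ} {a : ℕ → ℝ} (hY : ∀ k, MemLp (Y k) 2 μ)
    (hsum : Summable fun k => variance (Y k) μ / a k ^ 2) :
    ∀ᵐ ω ∂μ, Tendsto (fun k => (Y k ω - μ[Y k]) / a k) atTop (𝓝 0) := by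
  refine ae_tendsto_zero_of_tsum_measure_le_abs_ne_top fun ε hε => ?_
  have hcheb : ∀ k, μ {ω | ε ≤ |(Y k ω - μ[Y k]) / a k|}
      ≤ ENNReal.ofReal (variance (Y k) μ / a k ^ 2 / ε ^ 2) := by
    intro k
    rcases eq_or_ne (a k) 0 with ha | ha
    · simp [ha, hε.not_ge]
    have hset : {ω | ε ≤ |(Y k ω - μ[Y k]) / a k|} = {ω | ε * |a k| ≤ |Y k ω - μ[Y k]|} := by
      ext ω
      rw [Set.mem_ofPred_eq, Set.mem_ofPred_eq, abs_div, le_div_iff₀ (abs_pos.mpr ha)]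
    rw [hset, div_div, ← sq_abs (a k), ← mul_pow, mul_comm (|a k|)]
    exact meas_ge_le_variance_div_sq (hY k) (mul_pos hε (abs_pos.mpr ha))
  refine ne_top_of_le_ne_top
    (ENNReal.ofReal_ne_top (r := ∑' k, variance (Y k) μ / a k ^ 2 / ε ^ 2))
    ((ENNReal.tsum_le_tsum hcheb).trans_eq ?_)
  have hnonneg : ∀ k, 0 ≤ variance (Y k) μ / a k ^ 2 / ε ^ 2 := fun k => by
    have := variance_nonneg (Y k) μ
    positivity
  exact (ENNReal.ofReal_tsum_of_nonneg hnonneg (hsum.div_const _)).symm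

theorem integral_natCast_eq_measureReal_of_eq_zero_or_one {B : Ω → ℕ} (hB : Measurable B)
    (h01 : ∀ ω, B ω = 0 ∨ B ω = 1) :
    ∫ ω, (B ω : ℝ) ∂μ = μ.real {ω | B ω = 1} := by
  have hind : (fun ω => (B ω : ℝ)) = Set.indicator {ω | B ω = 1} 1 := by
    funext ω
    rcases h01 ω with h | h <;> simp [h]
  rw [hind]
  exact integral_indicator_one (hB (measurableSet_singleton 1))

variable [IsProbabilityMeasure μ]

theorem variance_sum_le_sum_integral_of_iIndepFun {ι : Type*} {X : ι → Ω → ℝ}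
    (hmeas : ∀ i, AEMeasurable (X i) μ) (hindep : iIndepFun X μ)
    (hX : ∀ i, ∀ᵐ ω ∂μ, X i ω ∈ Set.Icc 0 1) (s : Finset ι) :
    variance (∑ i ∈ s, X i) μ ≤ ∑ i ∈ s, μ[X i] := by
  rw [IndepFun.variance_sum (fun i _ => memLp_of_bounded (hX i) (hmeas i).aestronglyMeasurable 2)
    fun i _ j _ hij => hindep.indepFun hij]
  -- Bhatia–Davis: `Var X ≤ (1 - E X) E X`
  refine sum_le_sum fun i _ => (variance_le_sub_mul_sub (hX i) (hmeas i)).trans ?_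
  nlinarith [sq_nonneg μ[X i]]

theorem ae_tendsto_sum_div_of_iIndepFun {ι : Type*} {X : ι → Ω → ℝ}
    (hmeas : ∀ i, AEMeasurable (X i) μ) (hindep : iIndepFun X μ)
    (hX : ∀ i, ∀ᵐ ω ∂μ, X i ω ∈ Set.Icc 0 1) {s : ℕ → Finset ι} {a : ℕ → ℝ} {l : ℝ}
    (hmean : Tendsto (fun k => (∑ i ∈ s k, μ[X i]) / a k) atTop (𝓝 l))
    (ha : Summable fun k => (a k)⁻¹) :
    ∀ᵐ ω ∂μ, Tendsto (fun k => (∑ i ∈ s k, X i ω) / a k) atTop (𝓝 l) := by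
  have hL2 : ∀ i, MemLp (X i) 2 μ := fun i =>
    memLp_of_bounded (hX i) (hmeas i).aestronglyMeasurable 2
  have hint : ∀ k, μ[∑ i ∈ s k, X i] = ∑ i ∈ s k, μ[X i] := fun k => by
    simp only [Finset.sum_apply]
    exact integral_finsetSum _ fun i _ => (hL2 i).integrable one_le_two
  have hsum : Summable fun k => variance (∑ i ∈ s k, X i) μ / a k ^ 2 := by
    refine (ha.abs.mul_left (|l| + 1)).of_norm_bounded_eventually_nat ?_
    filter_upwards [hmean.abs.eventually (gt_mem_nhds (lt_add_one |l|))] with k hk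
    have hvar := variance_nonneg (∑ i ∈ s k, X i) μ
    calc ‖variance (∑ i ∈ s k, X i) μ / a k ^ 2‖
        = variance (∑ i ∈ s k, X i) μ / a k ^ 2 := Real.norm_of_nonneg (by positivity)
      _ ≤ (∑ i ∈ s k, μ[X i]) / a k ^ 2 := by
          gcongr
          exact variance_sum_le_sum_integral_of_iIndepFun hmeas hindep hX (s k)
      _ = (∑ i ∈ s k, μ[X i]) / a k * (a k)⁻¹ := by ring
      _ ≤ |(∑ i ∈ s k, μ[X i]) / a k| * |(a k)⁻¹| := by rw [← abs_mul]; exact le_abs_self _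
      _ ≤ (|l| + 1) * |(a k)⁻¹| := by gcongr
  filter_upwards [ae_tendsto_sub_integral_div_of_summable_variance_div_sq
    (fun k => memLp_finsetSum' _ fun i _ => hL2 i) hsum] with ω hω
  have h := hω.add hmean
  rw [zero_add] at h
  refine h.congr fun k => ?_
  rw [hint, Finset.sum_apply, ← add_div, sub_add_cancel]

end

/-- Strong law for the number of tables in CRP(α): with `B i` independent
Bernoulli indicators, `P(B i = 1) = α/(α + i)` (customer i+1 opens a new
table), and `K_n = ∑_{i<n} B i`, we have `K_n / log n → α` almost surely. -/
theorem crp_tables_log_strong_law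
    {Ω : Type*} [MeasurableSpace Ω] (μ : Measure Ω) [IsProbabilityMeasure μ]
    (α : ℝ) (hα : 0 < α) (B : ℕ → Ω → ℕ)
    (hmeas : ∀ i, Measurable (B i))
    (hindep : iIndepFun B μ)
    (h01 : ∀ i ω, B i ω = 0 ∨ B i ω = 1)
    (hp : ∀ i : ℕ, μ {ω | B i ω = 1} = ENNReal.ofReal (α / (α + i))) :
    ∀ᵐ ω ∂μ, Tendsto
      (fun n : ℕ => (∑ i ∈ Finset.range n, (B i ω : ℝ)) / Real.log n)
      atTop (nhds α) := by
  set X : ℕ → Ω → ℝ := fun i ω => B i ω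
  have hX01 : ∀ i ω, X i ω ∈ Set.Icc 0 1 := fun i ω => by
    rcases h01 i ω with h | h <;> simp [X, h]
  have hmean : ∀ i : ℕ, μ[X i] = α / (α + i) := fun i => by
    rw [integral_natCast_eq_measureReal_of_eq_zero_or_one (hmeas i) (h01 i), measureReal_def, hp,
      ENNReal.toReal_ofReal (by positivity)]
  have hc : StrictMono fun k : ℕ => 2 ^ k ^ 2 :=
    (pow_right_strictMono₀ one_lt_two).comp (Nat.pow_left_strictMono two_ne_zero)
  have hsub := ae_tendsto_sum_div_of_iIndepFun (X := X)
    (fun i => (measurable_from_top.comp (hmeas i)).aemeasurable)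
    (hindep.comp (fun _ n => (n : ℝ)) fun _ => measurable_from_top)
    (fun i => ae_of_all μ (hX01 i))
    (s := fun k => range (2 ^ k ^ 2)) (by
      simp only [hmean]
      exact (tendsto_sum_range_div_log_of_tendsto_mul
        (tendsto_succ_mul_div_add α)).comp hc.tendsto_atTop)
    summable_inv_log_two_pow_sq
  filter_upwards [hsub] with ω hω
  exact tendsto_div_of_monotone_of_tendsto_div_subseq
    (fun m n hmn => sum_le_sum_of_subset_of_nonneg (range_mono hmn) fun i _ _ => (hX01 i ω).1)
    (fun n => sum_nonneg fun i _ => (hX01 i ω).1) monotone_log_natCast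
    ((Real.tendsto_log_atTop.comp tendsto_natCast_atTop_atTop).eventually_gt_atTop 0)
    hc tendsto_log_two_pow_sq_succ_div hω
end
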